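/- arXiv:2002.11099 — 3 statements merged into one kernel-verified Lean document; each statement's English description precedes it below -/
import Mathlib

section
/- For any two probability distributions p, q on Ω×{0,1} and any hypothesis class H of Boolean functions on Ω, the excess risk of the q-optimal classifier under p satisfies r_p(h*(q)) − r*_p(H) ≤ 4·‖p − q‖_{F_H}. -/
open MeasureTheory

variable {Ω : Type*} [MeasurableSpace Ω]

/-- The misclassification loss `r_p(h) = Pr_{(X,Y)∼p}[h(X) ≠ Y]`. -/
noncomputable def risk (p : Measure (Ω × Bool)) (h : Ω → Bool) : ℝ :=
  (p {ω : Ω × Bool | h ω.1 ≠ ω.2}).toReal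

lemma risk_eq (p : Measure (Ω × Bool)) [IsProbabilityMeasure p] (h : Ω → Bool) :
    risk p h = (p ({ω : Ω | h ω = true} ×ˢ ({false} : Set Bool))).toReal
      + (p ({ω : Ω | h ω = false} ×ˢ ({true} : Set Bool))).toReal := by
  set A := ({ω : Ω | h ω = true} ×ˢ ({false} : Set Bool))
  set B := ({ω : Ω | h ω = false} ×ˢ ({true} : Set Bool))
  have hS : {ω : Ω × Bool | h ω.1 ≠ ω.2} = A ∪ B := by
    ext ⟨ω, b⟩
    cases b <;> cases hh : h ω <;> simp [A, B, Set.mem_prod, hh]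
  have ht : MeasurableSet {ω : Ω × Bool | ω.2 = true} :=
    measurable_snd (measurableSet_singleton true)
  have hsplit : p (A ∪ B) = p B + p A := by
    have := measure_inter_add_diff (μ := p) (A ∪ B) ht
    have h1 : (A ∪ B) ∩ {ω : Ω × Bool | ω.2 = true} = B := by
      ext ⟨ω, b⟩
      cases b <;> simp [A, B, Set.mem_prod]
    have h2 : (A ∪ B) \ {ω : Ω × Bool | ω.2 = true} = A := by
      ext ⟨ω, b⟩
      cases b <;> simp [A, B, Set.mem_prod]
    rw [h1, h2] at this
    exact this.symm
  rw [risk, hS, hsplit, ENNReal.toReal_add (measure_ne_top p B) (measure_ne_top p A)]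
  ring

/-- if `d` bounds the `F_H`-distance between `p` and `q`
(i.e. `|p(S) - q(S)| ≤ d` for every set `S = {ω : h ω = z} × {y}` with `h ∈ H`),
`hq` is an optimal classifier in `H` for `q` and `hp` one for `p`, then
`r_p(h*(q)) - r*_p(H) ≤ 4 d`. -/
theorem excess_risk_le_four_FH_dist
    (p q : Measure (Ω × Bool)) [IsProbabilityMeasure p] [IsProbabilityMeasure q]
    (H : Set (Ω → Bool)) (d : ℝ)
    (hd : ∀ h ∈ H, ∀ y z : Bool,
      |(p ({ω : Ω | h ω = z} ×ˢ ({y} : Set Bool))).toReal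
        - (q ({ω : Ω | h ω = z} ×ˢ ({y} : Set Bool))).toReal| ≤ d)
    (hq hp : Ω → Bool) (hqH : hq ∈ H) (hpH : hp ∈ H)
    (hqopt : ∀ h ∈ H, risk q hq ≤ risk q h)
    (hpopt : ∀ h ∈ H, risk p hp ≤ risk p h) :
    risk p hq - risk p hp ≤ 4 * d := by
  have key : ∀ h ∈ H, |risk p h - risk q h| ≤ 2 * d := by
    intro h hH
    rw [risk_eq p h, risk_eq q h]
    have h1 := hd h hH false true
    have h2 := hd h hH true false
    calc _ ≤ |(p ({ω : Ω | h ω = true} ×ˢ ({false} : Set Bool))).toReal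
            - (q ({ω : Ω | h ω = true} ×ˢ ({false} : Set Bool))).toReal|
          + |(p ({ω : Ω | h ω = false} ×ˢ ({true} : Set Bool))).toReal
            - (q ({ω : Ω | h ω = false} ×ˢ ({true} : Set Bool))).toReal| := by
            apply le_trans (le_of_eq (by ring_nf)) (abs_add_le _ _)
      _ ≤ 2 * d := by linarith
  have k1 := abs_le.mp (key hq hqH)
  have k2 := abs_le.mp (key hp hpH)
  have := hqopt hp hpH
  linarith [k1.1, k1.2, k2.1, k2.2]
end

section
/- For any class P of distributions on Ω and any distributions p, p' on Ω, if ψ_P(p') ∈ P minimizes ‖q − p'‖_{Y(P)} over q ∈ P, then ‖p − ψ_P(p')‖_TV ≤ 3·opt_P(p) + 4·‖p − p'‖_{Y(P)}. -/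
variable {Ω : Type*} [Fintype Ω]

/-- Probability that a (discrete) distribution `p : Ω → ℝ` assigns to `S`. -/
def probOf (p : Ω → ℝ) (S : Finset Ω) : ℝ := ∑ ω ∈ S, p ω

/-- Total-variation distance `sup_S |p(S) - q(S)|`. -/
noncomputable def dTV (p q : Ω → ℝ) : ℝ := ⨆ S : Finset Ω, |probOf p S - probOf q S|

/-- The Yatracos set `{ω : g ω ≤ f ω}` of a pair of densities. -/
noncomputable def ySet (f g : Ω → ℝ) : Finset Ω :=
  Finset.univ.filter fun ω => g ω ≤ f ω

/-- Yatracos-class distance: `sup_{f,g ∈ P} |p(Y(f,g)) - q(Y(f,g))|`. -/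
noncomputable def dY (P : Set (Ω → ℝ)) (p q : Ω → ℝ) : ℝ :=
  ⨆ f : P, ⨆ g : P, |probOf p (ySet f.1 g.1) - probOf q (ySet f.1 g.1)|

lemma dTV_bdd (p q : Ω → ℝ) :
    BddAbove (Set.range fun S : Finset Ω => |probOf p S - probOf q S|) :=
  (Set.finite_range _).bddAbove

lemma le_dTV (p q : Ω → ℝ) (S : Finset Ω) :
    |probOf p S - probOf q S| ≤ dTV p q :=
  le_ciSup (dTV_bdd p q) S

lemma dTV_symm (p q : Ω → ℝ) : dTV p q = dTV q p := by
  unfold dTV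
  exact iSup_congr fun S => abs_sub_comm _ _

lemma dTV_triangle (p q r : Ω → ℝ) : dTV p r ≤ dTV p q + dTV q r :=
  ciSup_le fun S => (abs_sub_le _ _ _).trans (add_le_add (le_dTV p q S) (le_dTV q r S))

lemma dY_bdd_inner (P : Set (Ω → ℝ)) (p q : Ω → ℝ) (f : P) :
    BddAbove (Set.range fun g : P =>
      |probOf p (ySet f.1 g.1) - probOf q (ySet f.1 g.1)|) := by
  refine BddAbove.mono ?_ (dTV_bdd p q)
  rintro x ⟨g, rfl⟩
  exact ⟨ySet f.1 g.1, rfl⟩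

lemma inner_le_dTV (P : Set (Ω → ℝ)) (p q : Ω → ℝ) [Nonempty P] (f : P) :
    (⨆ g : P, |probOf p (ySet f.1 g.1) - probOf q (ySet f.1 g.1)|) ≤ dTV p q :=
  ciSup_le fun g => le_dTV p q _

lemma dY_bdd_outer (P : Set (Ω → ℝ)) (p q : Ω → ℝ) [Nonempty P] :
    BddAbove (Set.range fun f : P =>
      ⨆ g : P, |probOf p (ySet f.1 g.1) - probOf q (ySet f.1 g.1)|) := by
  refine ⟨dTV p q, ?_⟩
  rintro x ⟨f, rfl⟩
  exact inner_le_dTV P p q f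

lemma le_dY (P : Set (Ω → ℝ)) (p q : Ω → ℝ) [Nonempty P] (f g : P) :
    |probOf p (ySet f.1 g.1) - probOf q (ySet f.1 g.1)| ≤ dY P p q :=
  (le_ciSup (dY_bdd_inner P p q f) g).trans (le_ciSup (dY_bdd_outer P p q) f)

lemma dY_le (P : Set (Ω → ℝ)) (p q : Ω → ℝ) [Nonempty P] {C : ℝ}
    (h : ∀ f g : P, |probOf p (ySet f.1 g.1) - probOf q (ySet f.1 g.1)| ≤ C) :
    dY P p q ≤ C :=
  ciSup_le fun f => ciSup_le fun g => h f g

lemma dY_le_dTV (P : Set (Ω → ℝ)) (p q : Ω → ℝ) [Nonempty P] :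
    dY P p q ≤ dTV p q :=
  dY_le P p q fun f g => le_dTV p q _

lemma dY_nonneg (P : Set (Ω → ℝ)) (p q : Ω → ℝ) [Nonempty P] :
    0 ≤ dY P p q := by
  obtain ⟨f⟩ := (inferInstance : Nonempty P)
  exact (abs_nonneg _).trans (le_dY P p q f f)

lemma dY_symm (P : Set (Ω → ℝ)) (p q : Ω → ℝ) : dY P p q = dY P q p := by
  unfold dY
  exact iSup_congr fun f => iSup_congr fun g => abs_sub_comm _ _

lemma dY_triangle (P : Set (Ω → ℝ)) (p q r : Ω → ℝ) [Nonempty P] :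
    dY P p r ≤ dY P p q + dY P q r :=
  dY_le P p r fun f g =>
    (abs_sub_le _ _ _).trans (add_le_add (le_dY P p q f g) (le_dY P q r f g))

lemma pair_bound (q ψ : Ω → ℝ) (hq : ∑ ω, q ω = 1) (hψ : ∑ ω, ψ ω = 1)
    (S : Finset Ω) :
    |probOf q S - probOf ψ S| ≤ probOf q (ySet q ψ) - probOf ψ (ySet q ψ) := by
  classical
  set A := ySet q ψ with hA
  have hmemA : ∀ ω, ω ∈ A ↔ ψ ω ≤ q ω := by
    intro ω; simp [hA, ySet]
  have hsum : ∀ (f : Ω → ℝ) (T : Finset Ω),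
      ∑ ω ∈ T, (q ω - f ω) = probOf q T - probOf f T := by
    intro f T; simp [probOf, Finset.sum_sub_distrib]
  -- upper bound
  have h1 : probOf q S - probOf ψ S ≤ probOf q A - probOf ψ A := by
    rw [← hsum ψ S, ← hsum ψ A]
    have e1 : ∑ ω ∈ S ∩ A, (q ω - ψ ω) + ∑ ω ∈ S \ A, (q ω - ψ ω)
        = ∑ ω ∈ S, (q ω - ψ ω) := Finset.sum_inter_add_sum_sdiff S A _
    have e2 : ∑ ω ∈ S \ A, (q ω - ψ ω) ≤ 0 := by
      apply Finset.sum_nonpos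
      intro ω hω
      rcases Finset.mem_sdiff.1 hω with ⟨-, hωA⟩
      have := (hmemA ω).not.1 hωA
      linarith [lt_of_not_ge this]
    have e3 : ∑ ω ∈ S ∩ A, (q ω - ψ ω) ≤ ∑ ω ∈ A, (q ω - ψ ω) := by
      apply Finset.sum_le_sum_of_subset_of_nonneg Finset.inter_subset_right
      intro ω hω _
      linarith [(hmemA ω).1 hω]
    linarith
  -- lower bound
  have h2 : probOf ψ S - probOf q S ≤ probOf q A - probOf ψ A := by
    have e1 : ∑ ω ∈ S \ A, (ψ ω - q ω) + ∑ ω ∈ S ∩ A, (ψ ω - q ω)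
        = ∑ ω ∈ S, (ψ ω - q ω) := by
      rw [add_comm]; exact Finset.sum_inter_add_sum_sdiff S A _
    have e2 : ∑ ω ∈ S ∩ A, (ψ ω - q ω) ≤ 0 := by
      apply Finset.sum_nonpos
      intro ω hω
      have := (hmemA ω).1 (Finset.mem_inter.1 hω).2
      linarith
    have e3 : ∑ ω ∈ S \ A, (ψ ω - q ω) ≤ ∑ ω ∈ Aᶜ, (ψ ω - q ω) := by
      apply Finset.sum_le_sum_of_subset_of_nonneg
      · intro ω hω
        exact Finset.mem_compl.2 (Finset.mem_sdiff.1 hω).2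
      · intro ω hω _
        have := (hmemA ω).not.1 (Finset.mem_compl.1 hω)
        linarith [lt_of_not_ge this]
    have e4 : ∑ ω ∈ A, (ψ ω - q ω) + ∑ ω ∈ Aᶜ, (ψ ω - q ω)
        = ∑ ω, (ψ ω - q ω) := Finset.sum_add_sum_compl A _
    have e5 : ∑ ω, (ψ ω - q ω) = 0 := by
      rw [Finset.sum_sub_distrib, hψ, hq]; ring
    have e6 : ∑ ω ∈ S, (ψ ω - q ω) = probOf ψ S - probOf q S := by
      simp [probOf, Finset.sum_sub_distrib]
    have e7 : ∑ ω ∈ A, (ψ ω - q ω) = probOf ψ A - probOf q A := by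
      simp [probOf, Finset.sum_sub_distrib]
    linarith
  rw [abs_le]
  constructor <;> linarith

lemma dTV_le_dY (P : Set (Ω → ℝ)) (q ψ : Ω → ℝ) (hq : q ∈ P) (hψ : ψ ∈ P)
    (hqs : ∑ ω, q ω = 1) (hψs : ∑ ω, ψ ω = 1) :
    dTV q ψ ≤ dY P q ψ := by
  haveI : Nonempty P := ⟨⟨q, hq⟩⟩
  refine ciSup_le fun S => ?_
  have h := pair_bound q ψ hqs hψs S
  refine h.trans ((le_abs_self _).trans ?_)
  exact le_dY P q ψ ⟨q, hq⟩ ⟨ψ, hψ⟩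

/-- if `ψ ∈ P` minimizes the Yatracos-class distance to `p'`
over `P`, then `‖p - ψ‖_TV ≤ 3 · opt_P(p) + 4 · ‖p - p'‖_{Y(P)}`
(stated for every `q ∈ P`, which gives the bound with `opt_P(p) = inf_q ‖p-q‖_TV`). -/
theorem yatracos_minimizer_tv_bound (P : Set (Ω → ℝ))
    (hP : ∀ f ∈ P, (∀ ω, 0 ≤ f ω) ∧ ∑ ω, f ω = 1)
    (p p' : Ω → ℝ)
    (hp : (∀ ω, 0 ≤ p ω) ∧ ∑ ω, p ω = 1)
    (hp' : (∀ ω, 0 ≤ p' ω) ∧ ∑ ω, p' ω = 1)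
    (ψ : Ω → ℝ) (hψ : ψ ∈ P)
    (hψopt : ∀ q ∈ P, dY P ψ p' ≤ dY P q p') :
    ∀ q ∈ P, dTV p ψ ≤ 3 * dTV p q + 4 * dY P p p' := by
  haveI : Nonempty P := ⟨⟨ψ, hψ⟩⟩
  intro q hq
  have h1 : dTV p ψ ≤ dTV p q + dTV q ψ := dTV_triangle p q ψ
  have h2 : dTV q ψ ≤ dY P q ψ :=
    dTV_le_dY P q ψ hq hψ (hP q hq).2 (hP ψ hψ).2
  have h3 : dY P q ψ ≤ dY P q p' + dY P p' ψ := dY_triangle P q p' ψ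
  have h4 : dY P p' ψ = dY P ψ p' := dY_symm P p' ψ
  have h5 : dY P ψ p' ≤ dY P q p' := hψopt q hq
  have h6 : dY P q p' ≤ dY P q p + dY P p p' := dY_triangle P q p p'
  have h7 : dY P q p ≤ dTV q p := dY_le_dTV P q p
  have h8 : dTV q p = dTV p q := dTV_symm q p
  have h9 : 0 ≤ dY P p p' := dY_nonneg P p p'
  linarith
end

section
/- Let B be a collection of m batches of n real samples each, with sorted combined samples x_1 ≤ … ≤ x_s (s = mn). Fix ℓ dividing s and let I* be the ℓ-interval partition of ℝ with cut points at x_Δ, x_{2Δ}, …, x_{(ℓ−1)Δ} where Δ = s/ℓ. Then the family S(I*) of all unions of intervals of I* is a (2k/ℓ)-cover of F_k (the family of unions of at most k real intervals) with respect to the empirical measure p̄_B. -/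
open Classical in
/-- Empirical measure of `S ⊆ ℝ` given by the sample points `x 1, …, x s`. -/
noncomputable def empMeas (s : ℕ) (x : ℕ → ℝ) (S : Set ℝ) : ℝ :=
  (((Finset.Icc 1 s).filter fun i => x i ∈ S).card : ℝ) / s

/-- The `j`-th block of the `Δ`-equiquantile `ℓ`-interval partition `I*` of `ℝ`
determined by the sorted samples `x`. -/
def block (x : ℕ → ℝ) (Δ ℓ : ℕ) (j : ℕ) : Set ℝ :=
  if j = 1 then Set.Iic (x Δ)
  else if j = ℓ then Set.Ioi (x ((ℓ - 1) * Δ))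
  else Set.Ioc (x ((j - 1) * Δ)) (x (j * Δ))

/-- `S` is a union of at most `k` real intervals (order-connected sets). -/
def IsUnionOfIntervals (k : ℕ) (S : Set ℝ) : Prop :=
  ∃ f : Fin k → Set ℝ, (∀ j, (f j).OrdConnected) ∧ S = ⋃ j, f j

section AuxCover

variable {x : ℕ → ℝ} {Δ ℓ : ℕ}

lemma block_subset_Iic (hℓ : 2 ≤ ℓ) {j : ℕ} (hj1 : 1 ≤ j) (hjℓ : j < ℓ) :
    block x Δ ℓ j ⊆ Set.Iic (x (j * Δ)) := by
  unfold block
  rcases eq_or_ne j 1 with h | h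
  · subst h
    rw [if_pos rfl, one_mul]
  · rw [if_neg h, if_neg (by omega)]
    exact fun y hy => Set.mem_Iic.2 hy.2

lemma block_subset_Ioi {j : ℕ} (hj : 2 ≤ j) :
    block x Δ ℓ j ⊆ Set.Ioi (x ((j - 1) * Δ)) := by
  unfold block
  rw [if_neg (by omega)]
  by_cases h : j = ℓ
  · subst h
    rw [if_pos rfl]
  · rw [if_neg h]
    exact fun y hy => hy.1

lemma block_lt (hx : Monotone x) (hℓ : 2 ≤ ℓ) {j1 j2 : ℕ} (h1 : 1 ≤ j1) (h2 : j2 ≤ ℓ)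
    (h12 : j1 < j2) {a c : ℝ} (ha : a ∈ block x Δ ℓ j1) (hc : c ∈ block x Δ ℓ j2) :
    a < c := by
  have hA : a ≤ x (j1 * Δ) := block_subset_Iic hℓ h1 (lt_of_lt_of_le h12 h2) ha
  have hC : x ((j2 - 1) * Δ) < c := block_subset_Ioi (by omega) hc
  have hm : x (j1 * Δ) ≤ x ((j2 - 1) * Δ) := hx (Nat.mul_le_mul_right _ (by omega))
  exact lt_of_le_of_lt (le_trans hA hm) hC

lemma exists_block (hx : Monotone x) (hℓ : 2 ≤ ℓ) (y : ℝ) :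
    ∃ j, 1 ≤ j ∧ j ≤ ℓ ∧ y ∈ block x Δ ℓ j := by
  classical
  by_cases h1 : y ≤ x Δ
  · exact ⟨1, le_refl 1, by omega, by unfold block; rw [if_pos rfl]; exact h1⟩
  by_cases hl : x ((ℓ - 1) * Δ) < y
  · exact ⟨ℓ, by omega, le_refl ℓ, by
      unfold block; rw [if_neg (by omega), if_pos rfl]; exact hl⟩
  push_neg at h1 hl
  have hex : ∃ j, y ≤ x (j * Δ) := ⟨ℓ - 1, hl⟩
  set j := Nat.find hex with hj
  have hspec : y ≤ x (j * Δ) := Nat.find_spec hex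
  have hjle : j ≤ ℓ - 1 := Nat.find_le hl
  have hj2 : 2 ≤ j := by
    by_contra h
    have hle : j * Δ ≤ 1 * Δ := Nat.mul_le_mul_right _ (by omega)
    have : y ≤ x Δ := le_trans hspec (by simpa using hx hle)
    exact absurd this (not_le.2 h1)
  have hmin : ¬ y ≤ x ((j - 1) * Δ) := Nat.find_min hex (by omega)
  push_neg at hmin
  refine ⟨j, by omega, by omega, ?_⟩
  unfold block
  rw [if_neg (by omega), if_neg (by omega)]
  exact ⟨hmin, hspec⟩

lemma rep_mem_block {j : ℕ} (hj1 : 1 ≤ j) (hjℓ : j < ℓ)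
    (hne : (block x Δ ℓ j).Nonempty) : x (j * Δ) ∈ block x Δ ℓ j := by
  rcases eq_or_ne j 1 with h | h
  · subst h
    unfold block
    rw [if_pos rfl]
    simp
  · obtain ⟨y, hy⟩ := hne
    unfold block at hy ⊢
    rw [if_neg h, if_neg (by omega)] at hy ⊢
    exact ⟨lt_of_lt_of_le hy.1 hy.2, le_refl _⟩

end AuxCover

/-- the family `S(I*)` of unions of blocks of the equiquantile
partition is a `(2k/ℓ)`-cover of `F_k` w.r.t. the empirical measure `p̄_B`. -/
theorem equiquantile_partition_covers (s Δ ℓ k : ℕ)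
    (hΔ : 1 ≤ Δ) (hℓ : 2 ≤ ℓ) (hk : 1 ≤ k) (hs : s = ℓ * Δ)
    (x : ℕ → ℝ) (hx : Monotone x)
    (S : Set ℝ) (hS : IsUnionOfIntervals k S) :
    ∃ D : Finset ℕ, D ⊆ Finset.Icc 1 ℓ ∧
      empMeas s x (symmDiff S (⋃ j ∈ D, block x Δ ℓ j)) ≤ 2 * k / ℓ := by
  classical
  obtain ⟨f, hf, hfS⟩ := hS
  -- the chosen union of blocks: block `j < ℓ` is taken iff its representative
  -- `x (j*Δ)` lies in `S`; block `ℓ` is taken iff all its sample points lie in `S`.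
  set pred : ℕ → Prop := fun j =>
    if j = ℓ then ∀ i ∈ Finset.Icc 1 s, x i ∈ block x Δ ℓ ℓ → x i ∈ S
    else x (j * Δ) ∈ S with hpred
  set D : Finset ℕ := (Finset.Icc 1 ℓ).filter pred with hD
  refine ⟨D, Finset.filter_subset _ _, ?_⟩
  set S' : Set ℝ := ⋃ j ∈ D, block x Δ ℓ j with hS'
  -- boundary blocks: meet `S` but are not contained in `S`
  set Bdry : Finset ℕ := (Finset.Icc 1 ℓ).filter
    (fun j => (block x Δ ℓ j ∩ S).Nonempty ∧ ¬ (block x Δ ℓ j ⊆ S)) with hB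
  -- candidate index windows, each of at most `Δ` indices
  set idxSet : ℕ → Finset ℕ := fun j =>
    if j = ℓ then Finset.Icc ((ℓ - 1) * Δ + 1) s else Finset.Icc ((j - 1) * Δ + 1) (j * Δ)
    with hidx
  have hidxcard : ∀ j, (idxSet j).card ≤ Δ := by
    intro j
    have h2 : (ℓ - 1) * Δ = ℓ * Δ - Δ := Nat.sub_one_mul ℓ Δ
    have h3 : (j - 1) * Δ = j * Δ - Δ := Nat.sub_one_mul j Δ
    simp only [hidx]
    by_cases h : j = ℓ
    · rw [if_pos h, Nat.card_Icc]
      omega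
    · rw [if_neg h, Nat.card_Icc]
      omega
  -- membership in `S'` is equivalent to the block index being in `D`
  have hS'mem : ∀ {y : ℝ} {j : ℕ}, 1 ≤ j → j ≤ ℓ → y ∈ block x Δ ℓ j →
      (y ∈ S' ↔ j ∈ D) := by
    intro y j hj1 hj2 hyb
    constructor
    · intro hy
      rw [hS'] at hy
      obtain ⟨j', hj'D, hyj'⟩ := Set.mem_iUnion₂.1 hy
      have hj'r : j' ∈ Finset.Icc 1 ℓ := Finset.filter_subset _ _ hj'D
      rw [Finset.mem_Icc] at hj'r
      rcases eq_or_ne j' j with h | h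
      · exact h ▸ hj'D
      · exfalso
        rcases h.lt_or_gt with hlt | hlt
        · exact lt_irrefl y (block_lt hx hℓ hj'r.1 hj2 hlt hyj' hyb)
        · exact lt_irrefl y (block_lt hx hℓ hj1 hj'r.2 hlt hyb hyj')
    · intro hjD
      exact Set.mem_iUnion₂.2 ⟨j, hjD, hyb⟩
  -- the key inclusion: every sample index in the symmetric difference lies in
  -- an index window of a boundary block
  have hmain : ∀ i ∈ Finset.Icc 1 s, x i ∈ symmDiff S S' → i ∈ Bdry.biUnion idxSet := by
    intro i hi hisym
    rw [Finset.mem_Icc] at hi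
    obtain ⟨j, hj1, hj2, hjb⟩ := exists_block hx hℓ (x i)
    rw [Set.mem_symmDiff] at hisym
    -- index lower bound, valid in all cases
    have hlow : (j - 1) * Δ < i := by
      rcases eq_or_ne j 1 with h | h
      · subst h
        simp only [Nat.sub_self, Nat.zero_mul]
        omega
      · by_contra hcon
        push_neg at hcon
        have h1 : x i ≤ x ((j - 1) * Δ) := hx hcon
        have h2 : x ((j - 1) * Δ) < x i := block_subset_Ioi (by omega) hjb
        linarith
    rcases hisym with ⟨hiS, hiS'⟩ | ⟨hiS', hiS⟩
    · -- `x i ∈ S`, `x i ∉ S'`; so `j ∉ D`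
      have hjD : j ∉ D := fun h => hiS' ((hS'mem hj1 hj2 hjb).2 h)
      have hnp : ¬ pred j := fun h => hjD (Finset.mem_filter.2 ⟨Finset.mem_Icc.2 ⟨hj1, hj2⟩, h⟩)
      by_cases hjl : j = ℓ
      · -- some sample point of block `ℓ` is outside `S`
        subst hjl
        simp only [hpred] at hnp
        rw [if_pos trivial] at hnp
        push_neg at hnp
        obtain ⟨i', hi', hi'b, hi'S⟩ := hnp
        have hBd : j ∈ Bdry := Finset.mem_filter.2 ⟨Finset.mem_Icc.2 ⟨hj1, hj2⟩,
          ⟨⟨x i, hjb, hiS⟩, fun hsub => hi'S (hsub hi'b)⟩⟩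
        refine Finset.mem_biUnion.2 ⟨j, hBd, ?_⟩
        simp only [hidx]
        rw [if_pos trivial, Finset.mem_Icc]
        omega
      · -- representative is outside `S`
        simp only [hpred] at hnp
        rw [if_neg hjl] at hnp
        have hrep : x (j * Δ) ∈ block x Δ ℓ j :=
          rep_mem_block hj1 (by omega) ⟨x i, hjb⟩
        have hBd : j ∈ Bdry := Finset.mem_filter.2 ⟨Finset.mem_Icc.2 ⟨hj1, hj2⟩,
          ⟨⟨x i, hjb, hiS⟩, fun hsub => hnp (hsub hrep)⟩⟩
        refine Finset.mem_biUnion.2 ⟨j, hBd, ?_⟩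
        simp only [hidx]
        rw [if_neg hjl, Finset.mem_Icc]
        refine ⟨by omega, ?_⟩
        by_contra hcon
        push_neg at hcon
        have h1 : x (j * Δ) ≤ x i := hx (le_of_lt hcon)
        have h2 : x i ≤ x (j * Δ) := block_subset_Iic hℓ hj1 (by omega) hjb
        have heq : x i = x (j * Δ) := le_antisymm h2 h1
        exact hnp (heq ▸ hiS)
    · -- `x i ∈ S'`, `x i ∉ S`; so `j ∈ D`
      have hjD : j ∈ D := (hS'mem hj1 hj2 hjb).1 hiS'
      have hp : pred j := (Finset.mem_filter.1 hjD).2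
      by_cases hjl : j = ℓ
      · subst hjl
        simp only [hpred] at hp
        rw [if_pos trivial] at hp
        exact absurd (hp i (Finset.mem_Icc.2 hi) hjb) hiS
      · rw [hpred, if_neg hjl] at hp
        have hrep : x (j * Δ) ∈ block x Δ ℓ j :=
          rep_mem_block hj1 (by omega) ⟨x i, hjb⟩
        have hBd : j ∈ Bdry := Finset.mem_filter.2 ⟨Finset.mem_Icc.2 ⟨hj1, hj2⟩,
          ⟨⟨x (j * Δ), hrep, hp⟩, fun hsub => hiS (hsub hjb)⟩⟩
        refine Finset.mem_biUnion.2 ⟨j, hBd, ?_⟩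
        simp only [hidx]
        rw [if_neg hjl, Finset.mem_Icc]
        refine ⟨by omega, ?_⟩
        by_contra hcon
        push_neg at hcon
        have h1 : x (j * Δ) ≤ x i := hx (le_of_lt hcon)
        have h2 : x i ≤ x (j * Δ) := block_subset_Iic hℓ hj1 (by omega) hjb
        have heq : x i = x (j * Δ) := le_antisymm h2 h1
        exact hiS (heq ▸ hp)
  -- there are at most `2 k` boundary blocks
  have hBcard : Bdry.card ≤ 2 * k := by
    set M : Fin k → Finset ℕ := fun t =>
      (Finset.Icc 1 ℓ).filter (fun j => (block x Δ ℓ j ∩ f t).Nonempty) with hM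
    have hsub : Bdry ⊆ (Finset.univ : Finset (Fin k)).biUnion (fun t =>
        if h : (M t).Nonempty then {(M t).min' h, (M t).max' h} else ∅) := by
      intro j hj
      rw [hB, Finset.mem_filter] at hj
      obtain ⟨hjr, ⟨y, hyb, hyS⟩, hnsub⟩ := hj
      rw [hfS] at hyS
      obtain ⟨t, hyt⟩ := Set.mem_iUnion.1 hyS
      have hjM : j ∈ M t := by
        rw [hM, Finset.mem_filter]
        exact ⟨hjr, ⟨y, hyb, hyt⟩⟩
      have hMne : (M t).Nonempty := ⟨j, hjM⟩
      refine Finset.mem_biUnion.2 ⟨t, Finset.mem_univ t, ?_⟩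
      rw [dif_pos hMne, Finset.mem_insert, Finset.mem_singleton]
      by_contra hcon
      push_neg at hcon
      obtain ⟨hne1, hne2⟩ := hcon
      have hmin : (M t).min' hMne < j := lt_of_le_of_ne ((M t).min'_le j hjM) (Ne.symm hne1)
      have hmax : j < (M t).max' hMne := lt_of_le_of_ne ((M t).le_max' j hjM) hne2
      -- block j is then contained in `f t ⊆ S`, contradiction
      have hminM := (M t).min'_mem hMne
      have hmaxM := (M t).max'_mem hMne
      obtain ⟨hminr, a, hab, hat⟩ := Finset.mem_filter.1 hminM
      obtain ⟨hmaxr, b, hbb, hbt⟩ := Finset.mem_filter.1 hmaxM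
      rw [Finset.mem_Icc] at hminr hmaxr
      rw [Finset.mem_Icc] at hjr
      apply hnsub
      intro c hcb
      have hac : a < c := block_lt hx hℓ hminr.1 hjr.2 hmin hab hcb
      have hcbb : c < b := block_lt hx hℓ hjr.1 hmaxr.2 hmax hcb hbb
      have hcf : c ∈ f t := (hf t).out hat hbt ⟨le_of_lt hac, le_of_lt hcbb⟩
      rw [hfS]
      exact Set.mem_iUnion.2 ⟨t, hcf⟩
    calc Bdry.card ≤ _ := Finset.card_le_card hsub
      _ ≤ ∑ t : Fin k, (if h : (M t).Nonempty then ({(M t).min' h, (M t).max' h} : Finset ℕ)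
            else ∅).card := Finset.card_biUnion_le
      _ ≤ ∑ _t : Fin k, 2 := by
          refine Finset.sum_le_sum fun t _ => ?_
          by_cases h : (M t).Nonempty
          · rw [dif_pos h]
            exact le_trans (Finset.card_insert_le _ _) (by simp)
          · rw [dif_neg h]
            simp
      _ = 2 * k := by simp [mul_comm]
  -- count the samples in the symmetric difference
  have hcount : (((Finset.Icc 1 s).filter fun i => x i ∈ symmDiff S S').card : ℕ) ≤ 2 * k * Δ := by
    have h1 : ((Finset.Icc 1 s).filter fun i => x i ∈ symmDiff S S') ⊆ Bdry.biUnion idxSet := by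
      intro i hi
      rw [Finset.mem_filter] at hi
      exact hmain i hi.1 hi.2
    calc ((Finset.Icc 1 s).filter fun i => x i ∈ symmDiff S S').card
        ≤ (Bdry.biUnion idxSet).card := Finset.card_le_card h1
      _ ≤ ∑ j ∈ Bdry, (idxSet j).card := Finset.card_biUnion_le
      _ ≤ ∑ _j ∈ Bdry, Δ := Finset.sum_le_sum fun j _ => hidxcard j
      _ = Bdry.card * Δ := by rw [Finset.sum_const, smul_eq_mul]
      _ ≤ 2 * k * Δ := Nat.mul_le_mul_right _ hBcard
  -- conclude
  unfold empMeas
  have hspos : (0 : ℝ) < (s : ℝ) := by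
    have : 0 < s := hs ▸ Nat.mul_pos (by omega) (by omega)
    exact_mod_cast this
  have hℓpos : (0 : ℝ) < (ℓ : ℝ) := by
    have : 0 < ℓ := by omega
    exact_mod_cast this
  rw [div_le_div_iff₀ hspos hℓpos]
  have hcR : (((Finset.Icc 1 s).filter fun i => x i ∈ symmDiff S S').card : ℝ) ≤ 2 * k * Δ := by
    exact_mod_cast hcount
  have hsR : (s : ℝ) = (ℓ : ℝ) * (Δ : ℝ) := by exact_mod_cast hs
  nlinarith [hcR, hℓpos, hsR]
end
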